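/- arXiv:2403.15592 — 2 statements merged into one kernel-verified Lean document; each statement's English description precedes it below -/
import Mathlib

section
/- For the five-dimensional system ẋ¹ = u¹, ẋ² = x³ + x⁴u¹, ẋ³ = a(x¹,…,x⁴) + (−x⁵ + b(x¹,…,x⁴))u¹, ẋ⁴ = x⁵ + c(x¹,…,x⁴)u¹, ẋ⁵ = u², the codistribution Q_{(1,1)} = span{dx¹, dx², dx³ + u¹ dx⁴} is not completely integrable (it fails the Frobenius integrability condition since dx³ + u¹dx⁴ involves u¹, d(dx³ + u¹dx⁴) = du¹ ∧ dx⁴ does not lie in the ideal generated by dx¹, dx², dx³ + u¹dx⁴ on the extended state-input manifold). -/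
/-- Coordinates on the (truncated) extended state–input manifold of the five
dimensional example: `p 0, …, p 4` are the states `x¹, …, x⁵`, `p 5 = u¹`,
`p 6 = u²`. -/
abbrev E8 := Fin 7 → ℝ

/-- The coordinate differential `dx^i` (resp. `du`). -/
noncomputable def dcoord (i : Fin 7) : E8 →L[ℝ] ℝ := ContinuousLinearMap.proj i

/-- The generators of the codistribution
`Q_{(1,1)} = span{dx¹, dx², dx³ + u¹ dx⁴}`. -/
noncomputable def Qgen : Fin 3 → E8 → (E8 →L[ℝ] ℝ)
  | 0 => fun _ => dcoord 0
  | 1 => fun _ => dcoord 1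
  | 2 => fun p => dcoord 2 + p 5 • dcoord 3

/-- Standard basis vector. -/
noncomputable def ebas (i : Fin 7) : E8 := Pi.single i 1

lemma dcoord_ebas (i k : Fin 7) : dcoord i (ebas k) = if k = i then 1 else 0 := by
  simp [dcoord, ebas, Pi.single_apply, eq_comm]

/-- Evaluation at a vector, as a linear map. -/
def evL (v : E8) : (E8 →L[ℝ] ℝ) →ₗ[ℝ] ℝ where
  toFun ω := ω v
  map_add' _ _ := rfl
  map_smul' _ _ := rfl

lemma norm_ebas_le (i : Fin 7) : ‖ebas i‖ ≤ 1 := by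
  refine (pi_norm_le_iff_of_nonneg zero_le_one).2 fun k => ?_
  simp only [ebas, Pi.single_apply]
  split <;> simp

/-- For the five-dimensional system
`ẋ¹ = u¹`, `ẋ² = x³ + x⁴u¹`, `ẋ³ = a + (−x⁵ + b)u¹`, `ẋ⁴ = x⁵ + c·u¹`, `ẋ⁵ = u²`
(with arbitrary smooth `a, b, c` of `(x¹,…,x⁴)`), the codistribution
`Q_{(1,1)} = span{dx¹, dx², dx³ + u¹dx⁴}` on the extended state–input manifold is
not completely integrable: around no point does there exist a triple of smooth
functions whose differentials span it. -/
theorem stmt8 (a b c : (Fin 4 → ℝ) → ℝ)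
    (ha : ContDiff ℝ (⊤ : ℕ∞) a) (hb : ContDiff ℝ (⊤ : ℕ∞) b) (hc : ContDiff ℝ (⊤ : ℕ∞) c)
    (p₀ : E8) :
    ¬ ∃ U ∈ nhds p₀, ∃ h : Fin 3 → E8 → ℝ,
        (∀ j, ContDiffOn ℝ (⊤ : ℕ∞) (h j) U) ∧
        ∀ p ∈ U, Submodule.span ℝ (Set.range fun j => fderiv ℝ (h j) p)
              = Submodule.span ℝ (Set.range fun j => Qgen j p) := by
  rintro ⟨U, hU, h, hsm, hspan⟩
  obtain ⟨ε, hε, hball⟩ := Metric.mem_nhds_iff.1 hU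
  -- every `fderiv ℝ (h j) p` for `p ∈ U` kills the direction `ebas 5`
  have hker : ∀ p ∈ U, ∀ j : Fin 3, fderiv ℝ (h j) p (ebas 5) = 0 := by
    intro p hp j
    have hmem : fderiv ℝ (h j) p ∈
        Submodule.span ℝ (Set.range fun j => Qgen j p) := by
      rw [← hspan p hp]
      exact Submodule.subset_span ⟨j, rfl⟩
    have hle : Submodule.span ℝ (Set.range fun j => Qgen j p)
        ≤ LinearMap.ker (evL (ebas 5)) := by
      rw [Submodule.span_le]
      rintro ω ⟨i, rfl⟩
      fin_cases i <;>
        simp [evL, Qgen, LinearMap.mem_ker, dcoord_ebas]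
    simpa [evL, LinearMap.mem_ker] using hle hmem
  -- differentiability on the ball
  have hdiff : ∀ j : Fin 3, ∀ x ∈ Metric.ball p₀ ε, DifferentiableAt ℝ (h j) x := by
    intro j x hx
    exact ((hsm j).contDiffAt
      (Filter.mem_of_superset (Metric.isOpen_ball.mem_nhds hx) hball)).differentiableAt (by simp)
  set v : E8 := (ε/2) • ebas 5 with hv
  -- translation invariance near `p₀`
  have hconst : ∀ x ∈ Metric.ball p₀ (ε/4), ∀ j : Fin 3, h j (x + v) = h j x := by
    intro x hx j
    have hseg : ∀ t ∈ Set.Icc (0:ℝ) (ε/2), x + t • ebas 5 ∈ Metric.ball p₀ ε := by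
      intro t ht
      rw [Metric.mem_ball]
      calc dist (x + t • ebas 5) p₀ ≤ dist (x + t • ebas 5) x + dist x p₀ :=
            dist_triangle _ _ _
        _ < ε/2 * 1 + ε/4 + ε/4 := by
            rw [Metric.mem_ball] at hx
            have : dist (x + t • ebas 5) x ≤ ε/2 * 1 := by
              rw [dist_eq_norm, add_sub_cancel_left, norm_smul, Real.norm_of_nonneg ht.1]
              exact mul_le_mul ht.2 (norm_ebas_le 5) (norm_nonneg _) (by linarith)
            linarith
        _ ≤ ε := by linarith
    have hderiv : ∀ t ∈ Set.Icc (0:ℝ) (ε/2),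
        HasDerivWithinAt (fun t : ℝ => h j (x + t • ebas 5)) 0 (Set.Icc 0 (ε/2)) t := by
      intro t ht
      have hc : HasDerivAt (fun t : ℝ => x + t • ebas 5) (ebas 5) t := by
        simpa using ((hasDerivAt_id t).smul_const (ebas 5)).const_add x
      have hpt := hseg t ht
      have hf := (hdiff j _ hpt).hasFDerivAt
      have := hf.comp_hasDerivAt t hc
      have h0 : fderiv ℝ (h j) (x + t • ebas 5) (ebas 5) = 0 :=
        hker _ (hball hpt) j
      rw [h0] at this
      exact this.hasDerivWithinAt
    have := Convex.norm_image_sub_le_of_norm_hasDerivWithin_le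
      (f' := fun _ => (0:ℝ)) (C := 0) hderiv (fun t _ => by simp) (convex_Icc _ _)
      (Set.left_mem_Icc.2 (by linarith)) (Set.right_mem_Icc.2 (by linarith))
    have h0 : ‖h j (x + (ε/2) • ebas 5) - h j x‖ ≤ 0 := by simpa using this
    have h1 := norm_le_zero_iff.1 h0
    rw [sub_eq_zero] at h1
    simpa [hv] using h1
  -- hence the derivatives at `p₀` and at `p₀ + v` agree
  set q : E8 := p₀ + v with hq
  have hqball : q ∈ Metric.ball p₀ ε := by
    rw [Metric.mem_ball, hq, dist_eq_norm, add_sub_cancel_left, hv, norm_smul]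
    calc ‖(ε/2 : ℝ)‖ * ‖ebas 5‖ ≤ (ε/2) * 1 := by
          gcongr
          · exact le_of_eq (Real.norm_of_nonneg (by linarith))
          · exact norm_ebas_le 5
      _ < ε := by linarith
  have hfd : ∀ j : Fin 3, fderiv ℝ (h j) p₀ = fderiv ℝ (h j) q := by
    intro j
    have hev : (fun x => h j (x + v)) =ᶠ[nhds p₀] h j := by
      filter_upwards [Metric.ball_mem_nhds p₀ (by linarith : (0:ℝ) < ε/4)] with x hx
      exact hconst x hx j
    have h1 : fderiv ℝ (fun x => h j (x + v)) p₀ = fderiv ℝ (h j) p₀ := hev.fderiv_eq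
    have h2 : HasFDerivAt (fun x => h j (x + v)) (fderiv ℝ (h j) q) p₀ := by
      have ht : HasFDerivAt (fun x : E8 => x + v) (ContinuousLinearMap.id ℝ E8) p₀ :=
        (hasFDerivAt_id p₀).add_const v
      have := ((hdiff j q hqball).hasFDerivAt).comp p₀ ht
      simpa [Function.comp_def] using this
    rw [← h1, h2.fderiv]
  -- so the codistributions at `p₀` and `q` coincide
  have hQ : Submodule.span ℝ (Set.range fun j => Qgen j p₀)
      = Submodule.span ℝ (Set.range fun j => Qgen j q) := by
    rw [← hspan p₀ (hball (Metric.mem_ball_self hε)), ← hspan q (hball hqball)]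
    congr 1
    exact congrArg Set.range (funext hfd)
  -- extract `dcoord 3 ∈ Q(p₀)`
  have hq5 : q 5 = p₀ 5 + ε/2 := by
    simp [hq, hv, ebas, Pi.single_eq_same]
  have hmem2 : (dcoord 2 + q 5 • dcoord 3) ∈
      Submodule.span ℝ (Set.range fun j => Qgen j p₀) := by
    rw [hQ]
    exact Submodule.subset_span ⟨2, rfl⟩
  have hmem2' : (dcoord 2 + p₀ 5 • dcoord 3) ∈
      Submodule.span ℝ (Set.range fun j => Qgen j p₀) :=
    Submodule.subset_span ⟨2, rfl⟩
  have hd3 : (dcoord 3 : E8 →L[ℝ] ℝ) ∈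
      Submodule.span ℝ (Set.range fun j => Qgen j p₀) := by
    have hsub := Submodule.sub_mem _ hmem2 hmem2'
    have heq : (dcoord 2 + q 5 • dcoord 3) - (dcoord 2 + p₀ 5 • dcoord 3)
        = (ε/2) • (dcoord 3 : E8 →L[ℝ] ℝ) := by
      rw [hq5]; module
    rw [heq] at hsub
    have := Submodule.smul_mem _ (ε/2)⁻¹ hsub
    rwa [smul_smul, inv_mul_cancel₀ (by linarith), one_smul] at this
  -- but `dcoord 3` is not in `Q(p₀)`: use `F ω = p₀5 * ω(e2) - ω(e3)`
  have hle : Submodule.span ℝ (Set.range fun j => Qgen j p₀)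
      ≤ LinearMap.ker (p₀ 5 • evL (ebas 2) - evL (ebas 3)) := by
    rw [Submodule.span_le]
    rintro ω ⟨i, rfl⟩
    fin_cases i <;>
      simp [evL, Qgen, LinearMap.mem_ker, dcoord_ebas] <;> ring
  have := hle hd3
  simp [evL, LinearMap.mem_ker, dcoord_ebas] at this
end

section
/- More generally, for the extended vector field f_u of a control-affine system and a function h(x, u, u_{[1]}, …, u_{[β]}) that is affine in its highest-order argument u_{[β]}, the Lie derivative L_{f_u}h is a function of (x, u, …, u_{[β+1]}) that is affine in u_{[β+1]}. In particular, for an x-flat output component φ^j(x) with relative degree k_j, every derivative φ^j_{[k_j + α]} is affine in the highest-order input derivative u_{[α]} appearing in it. -/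
/-- Vector fields on `ℝⁿ` (in coordinates). -/
abbrev Vec (n : ℕ) := (Fin n → ℝ) → (Fin n → ℝ)

/-- The (truncated) extended state–input manifold: a state in `ℝⁿ` together with the
input jets `u_{[0]}, …, u_{[L]}` of the two inputs. -/
abbrev ExtM (n L : ℕ) := (Fin n → ℝ) × (Fin (L + 1) → Fin 2 → ℝ)

/-- The `α`-th input jet `u^j_{[α]}` at an extended point (`0` above the truncation
order, which is assumed large enough to be irrelevant). -/
noncomputable def jet {n L : ℕ} (p : ExtM n L) (α : ℕ) (j : Fin 2) : ℝ :=
  if h : α < L + 1 then p.2 ⟨α, h⟩ j else 0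

/-- The extended system vector field `f_u` of the control-affine system
`ẋ = f(x) + g₁(x)u¹ + g₂(x)u²`, acting by the system dynamics in the state
directions and by shift in the input-jet directions. -/
noncomputable def extVF {n L : ℕ} (f g₁ g₂ : Vec n) : ExtM n L → ExtM n L :=
  fun p => (fun i => f p.1 i + jet p 0 0 * g₁ p.1 i + jet p 0 1 * g₂ p.1 i,
            fun α j => jet p ((α : ℕ) + 1) j)

/-- Iterated Lie derivative (total time derivative) of a function on the extended
manifold along `f_u`; `extLieIter f g₁ g₂ α h = h_{[α]}`. -/
noncomputable def extLieIter {n L : ℕ} (f g₁ g₂ : Vec n) :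
    ℕ → (ExtM n L → ℝ) → (ExtM n L → ℝ)
  | 0 => id
  | (k+1) => fun h p => fderiv ℝ (extLieIter f g₁ g₂ k h) p (extVF f g₁ g₂ p)

/-- The `i`-th entry of a coordinate vector, by natural-number index (`0`-based). -/
noncomputable def nth {n : ℕ} (w : Fin n → ℝ) (i : ℕ) : ℝ :=
  if h : i < n then w ⟨i, h⟩ else 0

/-- The `i`-th coordinate basis vector of `ℝⁿ`, by natural-number index. -/
noncomputable def nthBasis (n : ℕ) (i : ℕ) : Fin n → ℝ :=
  if h : i < n then Pi.single (⟨i, h⟩ : Fin n) (1 : ℝ) else 0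

/-- The differential `dx^i` of the `i`-th *state* coordinate on the extended
manifold. -/
noncomputable def stateD {n L : ℕ} (i : Fin n) : ExtM n L →L[ℝ] ℝ :=
  (ContinuousLinearMap.proj i).comp
    (ContinuousLinearMap.fst ℝ (Fin n → ℝ) (Fin (L + 1) → Fin 2 → ℝ))

/-- The pointwise codistribution `P_A = span{dφ_{[0,A]}}` spanned by the differentials
of the (extended) flat output components and their time derivatives up to orders
`A = (a₁, a₂)`. -/
noncomputable def Pspan {n L : ℕ} (f g₁ g₂ : Vec n) (φ : Fin 2 → ExtM n L → ℝ)
    (A : Fin 2 → ℕ) (p : ExtM n L) : Submodule ℝ (ExtM n L →L[ℝ] ℝ) :=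
  Submodule.span ℝ
    {ξ | ∃ j : Fin 2, ∃ α ≤ A j, ξ = fderiv ℝ (extLieIter f g₁ g₂ α (φ j)) p}

/-- The pointwise codistribution `span{dx}` of the state differentials. -/
noncomputable def Xspan (n L : ℕ) : Submodule ℝ (ExtM n L →L[ℝ] ℝ) :=
  Submodule.span ℝ (Set.range fun i : Fin n => (stateD i : ExtM n L →L[ℝ] ℝ))

/-- The pointwise codistribution `Q_A = span{dφ_{[0,A]}} ∩ span{dx}`. -/
noncomputable def Qspan {n L : ℕ} (f g₁ g₂ : Vec n) (φ : Fin 2 → ExtM n L → ℝ)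
    (A : Fin 2 → ℕ) (p : ExtM n L) : Submodule ℝ (ExtM n L →L[ℝ] ℝ) :=
  Pspan f g₁ g₂ φ A p ⊓ Xspan n L

/-- A codistribution on the extended manifold is (around generic points) completely
integrable: on a dense open set, it is locally spanned by differentials of smooth
functions. -/
def GenIntegrable {n L : ℕ} (Q : ExtM n L → Submodule ℝ (ExtM n L →L[ℝ] ℝ)) : Prop :=
  ∃ G : Set (ExtM n L), IsOpen G ∧ Dense G ∧ ∀ p₀ ∈ G,
    ∃ U ∈ nhds p₀, ∃ (q : ℕ) (h : Fin q → ExtM n L → ℝ),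
      (∀ i, ContDiffOn ℝ (⊤ : ℕ∞) (h i) U) ∧
      ∀ p ∈ U, Q p = Submodule.span ℝ (Set.range fun i => fderiv ℝ (h i) p)

/-- The structurally flat triangular normal form of Theorem 1 (coordinates `0`-based):
integrator chains of lengths `k₁` and `k₂` on top, then rows
`ż^l = a^l(z¹,…,z^{l+1}) + b^l(z¹,…,z^{l+1})v¹` with `b^{k₁+k₂} ≠ 0` and
`∂_{z^{l+1}}a^l ≠ 0` or `∂_{z^{l+1}}b^l ≠ 0`, and finally `ż^n = v²`. -/
def TriangularForm (n k₁ k₂ : ℕ) (F G₁ G₂ : Vec n) : Prop :=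
  -- first chain
  (∀ i, i + 1 < k₁ → ∀ z,
      nth (F z) i = nth z (i + 1) ∧ nth (G₁ z) i = 0 ∧ nth (G₂ z) i = 0) ∧
  (∀ z, nth (F z) (k₁ - 1) = 0 ∧ nth (G₁ z) (k₁ - 1) = 1 ∧ nth (G₂ z) (k₁ - 1) = 0) ∧
  -- second chain
  (∀ i, i + 1 < k₂ → ∀ z,
      nth (F z) (k₁ + i) = nth z (k₁ + i + 1) ∧
      nth (G₁ z) (k₁ + i) = 0 ∧ nth (G₂ z) (k₁ + i) = 0) ∧
  -- middle rows `ż^l = a^l + b^l v¹` (row indices k₁+k₂−1,…,n−2, 0-based)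
  (∀ l, k₁ + k₂ - 1 ≤ l → l + 1 < n →
    (∀ z z', (∀ i ≤ l + 1, nth z i = nth z' i) →
        nth (F z) l = nth (F z') l ∧ nth (G₁ z) l = nth (G₁ z') l) ∧
    (∀ z, nth (G₂ z) l = 0) ∧
    (∀ z, fderiv ℝ (fun y => nth (F y) l) z (nthBasis n (l + 1)) ≠ 0 ∨
          fderiv ℝ (fun y => nth (G₁ y) l) z (nthBasis n (l + 1)) ≠ 0)) ∧
  (∀ z, k₁ + k₂ < n → nth (G₁ z) (k₁ + k₂ - 1) ≠ 0) ∧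
  -- last row `ż^n = v²`
  (∀ z, nth (F z) (n - 1) = 0 ∧ nth (G₁ z) (n - 1) = 0 ∧ nth (G₂ z) (n - 1) = 1)

/-- The flat output `(z¹, z^{k₁+1})` of the triangular form, as functions on the
extended manifold. -/
noncomputable def triFlatOut (n L k₁ : ℕ) : Fin 2 → ExtM n L → ℝ :=
  fun j p => nth p.1 (if j = 0 then 0 else k₁)

/-- A function on the extended manifold depends only on `x` and the input jets of
order `< β`. -/
def DependsOnlyBelow {n L : ℕ} (β : ℕ) (h : ExtM n L → ℝ) : Prop :=
  ∀ p q : ExtM n L, p.1 = q.1 → (∀ α j, α < β → jet p α j = jet q α j) → h p = h q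

/-- A function on the extended manifold is a function of `(x, u, …, u_{[β]})` which is
affine in its highest-order argument `u_{[β]}`. -/
def AffineInJet {n L : ℕ} (β : ℕ) (h : ExtM n L → ℝ) : Prop :=
  ∃ (c : ExtM n L → ℝ) (m : Fin 2 → ExtM n L → ℝ),
    DependsOnlyBelow β c ∧ (∀ j, DependsOnlyBelow β (m j)) ∧
    ∀ p, h p = c p + ∑ j, m j p * jet p β j
namespace S12
variable {n L : ℕ}

noncomputable def jetL (n L : ℕ) (β : ℕ) (j : Fin 2) : ExtM n L →L[ℝ] ℝ :=
  if h : β < L + 1 then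
    (ContinuousLinearMap.proj j).comp
      ((ContinuousLinearMap.proj (⟨β, h⟩ : Fin (L + 1))).comp
        (ContinuousLinearMap.snd ℝ (Fin n → ℝ) (Fin (L + 1) → Fin 2 → ℝ)))
  else 0

@[simp] lemma jetL_apply (β : ℕ) (j : Fin 2) (p : ExtM n L) :
    jetL n L β j p = jet p β j := by
  unfold jetL jet; split <;> simp

noncomputable def Tmap (n L : ℕ) (β : ℕ) : ExtM n L →L[ℝ] ExtM n L :=
  (ContinuousLinearMap.fst ℝ _ _).prod
    (ContinuousLinearMap.pi fun α : Fin (L + 1) =>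
      if (α : ℕ) < β then
        (ContinuousLinearMap.proj α).comp
          (ContinuousLinearMap.snd ℝ (Fin n → ℝ) (Fin (L + 1) → Fin 2 → ℝ))
      else 0)

@[simp] lemma Tmap_fst (β : ℕ) (p : ExtM n L) : (Tmap n L β p).1 = p.1 := rfl

lemma Tmap_jet (β γ : ℕ) (j : Fin 2) (p : ExtM n L) :
    jet (Tmap n L β p) γ j = if γ < β then jet p γ j else 0 := by
  unfold jet Tmap
  by_cases h : γ < L + 1
  · simp only [dif_pos h]
    by_cases h2 : γ < β
    · simp [h2, ContinuousLinearMap.pi_apply]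
    · simp [h2, ContinuousLinearMap.pi_apply]
  · simp [dif_neg h]
    intro _ h'; omega

noncomputable def eVec (n L : ℕ) (β : ℕ) (j : Fin 2) : ExtM n L :=
  (0, fun α j' => if (α : ℕ) = β ∧ j' = j then 1 else 0)

lemma jet_eVec (β γ : ℕ) (j j' : Fin 2) (hβ : β < L + 1) :
    jet (eVec n L β j) γ j' = if γ = β ∧ j' = j then 1 else 0 := by
  unfold jet eVec
  by_cases h : γ < L + 1
  · simp [h]
  · simp only [dif_neg h]
    rw [if_neg]; rintro ⟨rfl, rfl⟩; exact h hβ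

lemma jet_add (p q : ExtM n L) (γ : ℕ) (j : Fin 2) :
    jet (p + q) γ j = jet p γ j + jet q γ j := by
  unfold jet; split <;> simp

lemma snd_eq_jet (p : ExtM n L) (γ : Fin (L + 1)) (j : Fin 2) :
    p.2 γ j = jet p (γ : ℕ) j := by
  unfold jet; rw [dif_pos γ.isLt]

lemma jet_extVF (f g₁ g₂ : Vec n) (p : ExtM n L) (γ : ℕ) (j : Fin 2)
    (hγ : γ < L + 1) : jet (extVF f g₁ g₂ p) γ j = jet p (γ + 1) j := by
  unfold jet extVF
  simp only [dif_pos hγ]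
  rfl

lemma Tmap_congr (β : ℕ) (p q : ExtM n L) (h1 : p.1 = q.1)
    (h2 : ∀ α (j : Fin 2), α < β → jet p α j = jet q α j) :
    Tmap n L β p = Tmap n L β q := by
  refine Prod.ext h1 ?_
  funext α j
  show (Tmap n L β p).2 α j = (Tmap n L β q).2 α j
  unfold Tmap
  simp only [ContinuousLinearMap.prod_apply, ContinuousLinearMap.pi_apply]
  by_cases hb : (α : ℕ) < β
  · simp only [if_pos hb, ContinuousLinearMap.comp_apply,
      ContinuousLinearMap.coe_snd', ContinuousLinearMap.proj_apply]
    rw [snd_eq_jet, snd_eq_jet]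
    exact h2 _ j hb
  · simp [if_neg hb]

lemma extVF_fst_congr (f g₁ g₂ : Vec n) (p q : ExtM n L) (h1 : p.1 = q.1)
    (h2 : ∀ j : Fin 2, jet p 0 j = jet q 0 j) :
    (extVF f g₁ g₂ p).1 = (extVF f g₁ g₂ q).1 := by
  funext i
  show f p.1 i + jet p 0 0 * g₁ p.1 i + jet p 0 1 * g₂ p.1 i
      = f q.1 i + jet q 0 0 * g₁ q.1 i + jet q 0 1 * g₂ q.1 i
  rw [h1, h2 0, h2 1]

noncomputable def shiftL (n L : ℕ) : ExtM n L →L[ℝ] (Fin (L + 1) → Fin 2 → ℝ) :=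
  ContinuousLinearMap.pi fun α : Fin (L + 1) =>
    ContinuousLinearMap.pi fun j : Fin 2 => jetL n L ((α : ℕ) + 1) j

lemma extVF_eq (f g₁ g₂ : Vec n) :
    extVF (L := L) f g₁ g₂ = fun p =>
      (f p.1 + jetL n L 0 0 p • g₁ p.1 + jetL n L 0 1 p • g₂ p.1, shiftL n L p) := by
  funext p
  refine Prod.ext ?_ ?_
  · funext i
    simp [extVF, Pi.add_apply, Pi.smul_apply, smul_eq_mul]
  · funext α j
    simp [extVF, shiftL, ContinuousLinearMap.pi_apply]

lemma extVF_contDiff (f g₁ g₂ : Vec n) (hf : ContDiff ℝ (⊤ : ℕ∞) f)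
    (hg₁ : ContDiff ℝ (⊤ : ℕ∞) g₁) (hg₂ : ContDiff ℝ (⊤ : ℕ∞) g₂) :
    ContDiff ℝ (⊤ : ℕ∞) (extVF (L := L) f g₁ g₂) := by
  rw [extVF_eq]
  refine ContDiff.prodMk ?_ ((shiftL n L).contDiff)
  have hfst : ContDiff ℝ (⊤ : ℕ∞) (fun p : ExtM n L => p.1) := contDiff_fst
  refine ContDiff.add (ContDiff.add (hf.comp hfst) ?_) ?_
  · exact ContDiff.smul ((jetL n L 0 0).contDiff) (hg₁.comp hfst)
  · exact ContDiff.smul ((jetL n L 0 1).contDiff) (hg₂.comp hfst)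

lemma lie_contDiff (f g₁ g₂ : Vec n) (hf : ContDiff ℝ (⊤ : ℕ∞) f)
    (hg₁ : ContDiff ℝ (⊤ : ℕ∞) g₁) (hg₂ : ContDiff ℝ (⊤ : ℕ∞) g₂)
    (h : ExtM n L → ℝ) (hh : ContDiff ℝ (⊤ : ℕ∞) h) :
    ContDiff ℝ (⊤ : ℕ∞) (fun p => fderiv ℝ h p (extVF f g₁ g₂ p)) :=
  (hh.fderiv_right (by simp)).clm_apply (extVF_contDiff f g₁ g₂ hf hg₁ hg₂)

lemma extLieIter_contDiff (f g₁ g₂ : Vec n) (hf : ContDiff ℝ (⊤ : ℕ∞) f)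
    (hg₁ : ContDiff ℝ (⊤ : ℕ∞) g₁) (hg₂ : ContDiff ℝ (⊤ : ℕ∞) g₂)
    (h : ExtM n L → ℝ) (hh : ContDiff ℝ (⊤ : ℕ∞) h) (k : ℕ) :
    ContDiff ℝ (⊤ : ℕ∞) (extLieIter f g₁ g₂ k h) := by
  induction k with
  | zero => exact hh
  | succ k ih => exact lie_contDiff f g₁ g₂ hf hg₁ hg₂ _ ih

/-- Part 1: the Lie derivative of a function affine in `u_{[β]}` is affine in
`u_{[β+1]}`. -/
lemma part1 (f g₁ g₂ : Vec n) (β : ℕ) (h : ExtM n L → ℝ)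
    (hh : ContDiff ℝ (⊤ : ℕ∞) h) (hβL : β + 1 ≤ L) (hA : AffineInJet β h) :
    AffineInJet (β + 1) (fun p => fderiv ℝ h p (extVF f g₁ g₂ p)) := by
  obtain ⟨c, m, hc, hm, hsum⟩ := hA
  have hβ1 : β < L + 1 := by omega
  set T := Tmap n L β with hTdef
  set e := eVec n L β with hedef
  set V := extVF (L := L) f g₁ g₂ with hVdef
  have hTagree : ∀ p : ExtM n L, ∀ α (j : Fin 2), α < β → jet (T p) α j = jet p α j := by
    intro p α j hα; rw [hTdef, Tmap_jet, if_pos hα]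
  have hTjetβ : ∀ p : ExtM n L, ∀ j, jet (T p) β j = 0 := by
    intro p j; rw [hTdef, Tmap_jet, if_neg (lt_irrefl β)]
  have hhT : ∀ p, h (T p) = c p := by
    intro p
    rw [hsum]
    have h1 : c (T p) = c p := hc _ _ (Tmap_fst β p) (fun α j hα => hTagree p α j hα)
    simp [hTjetβ, h1]
  have hTe_fst : ∀ (p : ExtM n L) (j : Fin 2), (T p + e j).1 = p.1 := by
    intro p j
    show (T p).1 + (e j).1 = p.1
    rw [hTdef, hedef]; simp [eVec, Tmap_fst]
  have hTe_jet : ∀ (p : ExtM n L) (j₀ : Fin 2) (α : ℕ) (j : Fin 2),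
      jet (T p + e j₀) α j =
        (if α < β then jet p α j else 0) + (if α = β ∧ j = j₀ then 1 else 0) := by
    intro p j₀ α j
    rw [jet_add, hTdef, Tmap_jet, hedef, jet_eVec _ _ _ _ hβ1]
  have hTe_ag : ∀ (p : ExtM n L) (j₀ : Fin 2) (α : ℕ) (j : Fin 2), α < β →
      jet (T p + e j₀) α j = jet p α j := by
    intro p j₀ α j hα
    rw [hTe_jet, if_pos hα, if_neg (by rintro ⟨rfl, -⟩; omega), add_zero]
  have hhTe : ∀ p (j₀ : Fin 2), h (T p + e j₀) = c p + m j₀ p := by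
    intro p j₀
    rw [hsum]
    have h1 : c (T p + e j₀) = c p := hc _ _ (hTe_fst p j₀) (hTe_ag p j₀)
    have h2 : ∀ j, m j (T p + e j₀) = m j p := fun j => hm j _ _ (hTe_fst p j₀) (hTe_ag p j₀)
    have h3 : ∀ j, jet (T p + e j₀) β j = if j = j₀ then 1 else 0 := by
      intro j; rw [hTe_jet, if_neg (lt_irrefl β), zero_add]; simp
    rw [h1]
    congr 1
    calc ∑ j, m j (T p + e j₀) * jet (T p + e j₀) β j
        = ∑ j, m j p * (if j = j₀ then 1 else 0) := by
          exact Finset.sum_congr rfl fun j _ => by rw [h2, h3]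
      _ = m j₀ p := by simp
  have hdecomp : h = fun p => h (T p) + ∑ j, (h (T p + e j) - h (T p)) * jetL n L β j p := by
    funext p
    simp only [jetL_apply]
    rw [hsum p]
    congr 1
    · exact (hhT p).symm
    · refine Finset.sum_congr rfl fun j _ => ?_
      rw [hhTe, hhT]; ring
  have hhd : Differentiable ℝ h := hh.differentiable (by simp)
  have key : ∀ p, fderiv ℝ h p (V p) =
      (fderiv ℝ h (T p)) (T (V p)) +
        ∑ j, ((h (T p + e j) - h (T p)) * jet p (β + 1) j +
              jet p β j * ((fderiv ℝ h (T p + e j)) (T (V p)) -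
                           (fderiv ℝ h (T p)) (T (V p)))) := by
    intro p
    have hCd : HasFDerivAt (fun q => h (T q)) ((fderiv ℝ h (T p)).comp T) p :=
      (hhd (T p)).hasFDerivAt.comp p T.hasFDerivAt
    have hCe : ∀ j, HasFDerivAt (fun q => h (T q + e j))
        ((fderiv ℝ h (T p + e j)).comp T) p := fun j =>
      (hhd (T p + e j)).hasFDerivAt.comp p (T.hasFDerivAt.add_const (e j))
    have hM : ∀ j, HasFDerivAt (fun q => h (T q + e j) - h (T q))
        ((fderiv ℝ h (T p + e j)).comp T - (fderiv ℝ h (T p)).comp T) p :=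
      fun j => (hCe j).sub hCd
    have hprod : ∀ j : Fin 2, HasFDerivAt
        (fun q => (h (T q + e j) - h (T q)) * jetL n L β j q)
        ((h (T p + e j) - h (T p)) • (jetL n L β j : ExtM n L →L[ℝ] ℝ) +
         (jetL n L β j p) •
           ((fderiv ℝ h (T p + e j)).comp T - (fderiv ℝ h (T p)).comp T)) p :=
      fun j => (hM j).mul (jetL n L β j).hasFDerivAt
    have hF : HasFDerivAt
        (fun p => h (T p) + ∑ j, (h (T p + e j) - h (T p)) * jetL n L β j p)
        ((fderiv ℝ h (T p)).comp T +
          ∑ j, ((h (T p + e j) - h (T p)) • (jetL n L β j : ExtM n L →L[ℝ] ℝ) +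
            (jetL n L β j p) •
              ((fderiv ℝ h (T p + e j)).comp T - (fderiv ℝ h (T p)).comp T))) p :=
      hCd.add (HasFDerivAt.fun_sum (fun j _ => hprod j))
    rw [congrFun (congrArg (fderiv ℝ) hdecomp) p, hF.fderiv]
    have hjv : ∀ j : Fin 2, jet (V p) β j = jet p (β + 1) j := fun j =>
      jet_extVF f g₁ g₂ p β j hβ1
    simp only [ContinuousLinearMap.add_apply, ContinuousLinearMap.sum_apply,
      ContinuousLinearMap.smul_apply, ContinuousLinearMap.comp_apply,
      ContinuousLinearMap.sub_apply, smul_eq_mul, jetL_apply, hjv]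
  -- the congruence of the new coefficient functions
  have hcong : ∀ (p q : ExtM n L), p.1 = q.1 →
      (∀ α (j : Fin 2), α < β + 1 → jet p α j = jet q α j) →
      T p = T q ∧ T (V p) = T (V q) := by
    intro p q h1 h2
    have hT : T p = T q := Tmap_congr β p q h1 (fun α j hα => h2 α j (by omega))
    have hVfst : (V p).1 = (V q).1 :=
      extVF_fst_congr f g₁ g₂ p q h1 (fun j => h2 0 j (by omega))
    have hTV : T (V p) = T (V q) := by
      refine Tmap_congr β (V p) (V q) hVfst ?_
      intro α j hα
      rw [hVdef, jet_extVF f g₁ g₂ p α j (by omega), jet_extVF f g₁ g₂ q α j (by omega)]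
      exact h2 (α + 1) j (by omega)
    exact ⟨hT, hTV⟩
  refine ⟨fun p => (fderiv ℝ h (T p)) (T (V p)) +
      ∑ j, jet p β j * ((fderiv ℝ h (T p + e j)) (T (V p)) -
                        (fderiv ℝ h (T p)) (T (V p))),
    fun j p => h (T p + e j) - h (T p), ?_, ?_, ?_⟩
  · intro p q h1 h2
    obtain ⟨hT, hTV⟩ := hcong p q h1 h2
    dsimp only
    rw [hT, hTV]
    congr 1
    refine Finset.sum_congr rfl fun j _ => ?_
    rw [h2 β j (by omega)]
  · intro j p q h1 h2
    obtain ⟨hT, -⟩ := hcong p q h1 h2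
    dsimp only
    rw [hT]
  · intro p
    dsimp only
    rw [key p, Finset.sum_add_distrib]
    ring

/-- Base case for Part 2: the Lie derivative of a function of `x` alone is affine
in `u = u_{[0]}`. -/
lemma base (f g₁ g₂ : Vec n) (h : ExtM n L → ℝ) (hh : ContDiff ℝ (⊤ : ℕ∞) h)
    (hdep : DependsOnlyBelow 0 h) :
    AffineInJet 0 (fun p => fderiv ℝ h p (extVF f g₁ g₂ p)) := by
  set H : (Fin n → ℝ) → ℝ := fun x => h (x, 0) with hHdef
  have hHsm : ContDiff ℝ (⊤ : ℕ∞) H :=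
    hh.comp (ContinuousLinearMap.inl ℝ (Fin n → ℝ) (Fin (L + 1) → Fin 2 → ℝ)).contDiff
  have hhH : h = fun p : ExtM n L => H p.1 := by
    funext p
    exact hdep p (p.1, 0) rfl (fun α j h0 => absurd h0 (Nat.not_lt_zero α))
  have key : ∀ p : ExtM n L, fderiv ℝ h p (extVF f g₁ g₂ p) =
      fderiv ℝ H p.1 (f p.1) + (fderiv ℝ H p.1 (g₁ p.1) * jet p 0 0 +
        fderiv ℝ H p.1 (g₂ p.1) * jet p 0 1) := by
    intro p
    have hFd : HasFDerivAt (fun p : ExtM n L => H p.1)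
        ((fderiv ℝ H p.1).comp (ContinuousLinearMap.fst ℝ (Fin n → ℝ)
          (Fin (L + 1) → Fin 2 → ℝ))) p :=
      ((hHsm.differentiable (by simp)) p.1).hasFDerivAt.comp p hasFDerivAt_fst
    rw [congrFun (congrArg (fderiv ℝ) hhH) p, hFd.fderiv]
    have hv1 : (extVF (L := L) f g₁ g₂ p).1 =
        f p.1 + jet p 0 0 • g₁ p.1 + jet p 0 1 • g₂ p.1 := by
      funext i
      simp [extVF, Pi.add_apply, Pi.smul_apply, smul_eq_mul]
    simp only [ContinuousLinearMap.comp_apply, ContinuousLinearMap.coe_fst', hv1,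
      map_add, map_smul, smul_eq_mul]
    ring
  refine ⟨fun p => fderiv ℝ H p.1 (f p.1),
    fun j p => fderiv ℝ H p.1 (if j = 0 then g₁ p.1 else g₂ p.1), ?_, ?_, ?_⟩
  · intro p q h1 _; dsimp only; rw [h1]
  · intro j p q h1 _; dsimp only; rw [h1]
  · intro p
    dsimp only
    rw [key p, Fin.sum_univ_two]
    norm_num

end S12

/-- For the extended vector field `f_u` of a control-affine system
and a function `h(x, u, …, u_{[β]})` affine in `u_{[β]}`, the Lie derivative
`L_{f_u}h` is a function of `(x, u, …, u_{[β+1]})` affine in `u_{[β+1]}`.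
In particular, for an `x`-flat output component `φ` with relative degree `k` (i.e.
whose first `k − 1` time derivatives are functions of the state only), every
derivative `φ_{[k+α]}` is affine in the highest input derivative `u_{[α]}`. -/
theorem stmt12 (n L : ℕ) (f g₁ g₂ : Vec n)
    (hf : ContDiff ℝ (⊤ : ℕ∞) f) (hg₁ : ContDiff ℝ (⊤ : ℕ∞) g₁) (hg₂ : ContDiff ℝ (⊤ : ℕ∞) g₂) :
    (∀ (β : ℕ) (h : ExtM n L → ℝ), ContDiff ℝ (⊤ : ℕ∞) h → β + 1 ≤ L →
      AffineInJet β h →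
      AffineInJet (β + 1) (fun p => fderiv ℝ h p (extVF f g₁ g₂ p))) ∧
    (∀ (φ : (Fin n → ℝ) → ℝ) (k : ℕ), ContDiff ℝ (⊤ : ℕ∞) φ → 1 ≤ k →
      (∀ α < k, DependsOnlyBelow (n := n) (L := L) 0
          (extLieIter f g₁ g₂ α (fun p => φ p.1))) →
      ∀ α, α ≤ L →
        AffineInJet α (extLieIter f g₁ g₂ (k + α) (fun p : ExtM n L => φ p.1))) := by
  constructor
  · intro β h hh hβL hA
    exact S12.part1 f g₁ g₂ β h hh hβL hA
  · intro φ k hφ hk hlow α hαL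
    have hφ' : ContDiff ℝ (⊤ : ℕ∞) (fun p : ExtM n L => φ p.1) := hφ.comp contDiff_fst
    induction α with
    | zero =>
      obtain ⟨k', rfl⟩ : ∃ k', k = k' + 1 :=
        ⟨k - 1, (Nat.succ_pred_eq_of_pos hk).symm⟩
      show AffineInJet 0 (extLieIter f g₁ g₂ (k' + 1 + 0) (fun p : ExtM n L => φ p.1))
      have heq : extLieIter (L := L) f g₁ g₂ (k' + 1 + 0) (fun p : ExtM n L => φ p.1) =
          fun p => fderiv ℝ (extLieIter f g₁ g₂ k' (fun p : ExtM n L => φ p.1)) p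
            (extVF f g₁ g₂ p) := rfl
      rw [heq]
      exact S12.base f g₁ g₂ _
        (S12.extLieIter_contDiff f g₁ g₂ hf hg₁ hg₂ _ hφ' k')
        (hlow k' (by omega))
    | succ α ih =>
      have hIH : AffineInJet α (extLieIter (L := L) f g₁ g₂ (k + α)
          (fun p : ExtM n L => φ p.1)) := ih (by omega)
      have heq : extLieIter (L := L) f g₁ g₂ (k + (α + 1)) (fun p : ExtM n L => φ p.1) =
          fun p => fderiv ℝ (extLieIter f g₁ g₂ (k + α) (fun p : ExtM n L => φ p.1)) p
            (extVF f g₁ g₂ p) := rfl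
      rw [heq]
      exact S12.part1 f g₁ g₂ α _
        (S12.extLieIter_contDiff f g₁ g₂ hf hg₁ hg₂ _ hφ' (k + α)) hαL hIH
end
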